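/- Let G be a finite group and let A ≤ B ≤ G be subgroups. If A is 𝔑-abnormal in G, then A is 𝔑-abnormal in B and N_G(A) = A. -/

import Mathlib

variable {G : Type*}

/-- `K` is a maximal subgroup of `L`: `K < L` and there is no subgroup strictly between. -/
def IsMaximalSubgroupOf [Group G] (K L : Subgroup G) : Prop :=
  K < L ∧ ∀ M : Subgroup G, K < M → M ≤ L → M = L

/-- The quotient of `L` by the normal core of `K` in `L` is nilpotent. -/
def NilpotentQuotByCore [Group G] (K L : Subgroup G) : Prop :=
  Group.IsNilpotent (↥L ⧸ (K.subgroupOf L).normalCore)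

/-- The quotient of `L` by the normal core of `K` in `L` has nilpotent derived subgroup
(i.e. belongs to the formation `𝔑𝔄`). -/
def NAQuotByCore [Group G] (K L : Subgroup G) : Prop :=
  Group.IsNilpotent ↥(commutator (↥L ⧸ (K.subgroupOf L).normalCore))

/-- `H` is `𝔑`-subnormal in `G`: `H = G` or there is a chain
`H = H₀ <· H₁ <· ... <· Hₙ = G` of maximal subgroups with each `Hᵢ/(Hᵢ₋₁)_{Hᵢ}` nilpotent. -/
def NSubnormal [Group G] (H : Subgroup G) : Prop :=
  H = ⊤ ∨ ∃ (n : ℕ) (c : Fin (n + 1) → Subgroup G),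
    c 0 = H ∧ c (Fin.last n) = ⊤ ∧
    ∀ i : Fin n, IsMaximalSubgroupOf (c i.castSucc) (c i.succ) ∧
      NilpotentQuotByCore (c i.castSucc) (c i.succ)

/-- `H` is `𝔑𝔄`-subnormal in `G`: `H = G` or there is a chain
`H = H₀ <· H₁ <· ... <· Hₙ = G` of maximal subgroups with each `Hᵢ/(Hᵢ₋₁)_{Hᵢ}`
having nilpotent derived subgroup. -/
def NASubnormal [Group G] (H : Subgroup G) : Prop :=
  H = ⊤ ∨ ∃ (n : ℕ) (c : Fin (n + 1) → Subgroup G),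
    c 0 = H ∧ c (Fin.last n) = ⊤ ∧
    ∀ i : Fin n, IsMaximalSubgroupOf (c i.castSucc) (c i.succ) ∧
      NAQuotByCore (c i.castSucc) (c i.succ)

/-- `H` is `𝔑`-abnormal in `G`: for all `K`, `L` with `H ≤ K` and `K` maximal in `L`,
the quotient `L/K_L` is not nilpotent. -/
def NAbnormal [Group G] (H : Subgroup G) : Prop :=
  ∀ K L : Subgroup G, H ≤ K → IsMaximalSubgroupOf K L → ¬ NilpotentQuotByCore K L

/-- `H` is `𝔑𝔄`-abnormal in `G`: for all `K`, `L` with `H ≤ K` and `K` maximal in `L`,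
the quotient `L/K_L` does not have nilpotent derived subgroup. -/
def NAAbnormal [Group G] (H : Subgroup G) : Prop :=
  ∀ K L : Subgroup G, H ≤ K → IsMaximalSubgroupOf K L → ¬ NAQuotByCore K L

/-- `N` is the nilpotent residual `G^𝔑` of `G`: the smallest normal subgroup
with nilpotent quotient. -/
def IsNilpotentResidual [Group G] (N : Subgroup G) : Prop :=
  ∃ hN : N.Normal,
    haveI := hN
    Group.IsNilpotent (G ⧸ N) ∧
      ∀ M : Subgroup G, ∀ hM : M.Normal,
        (haveI := hM; Group.IsNilpotent (G ⧸ M)) → N ≤ M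

/-- `N` is the `𝔑𝔄`-residual `G^{𝔑𝔄}` of `G`: the smallest normal subgroup whose
quotient has nilpotent derived subgroup. -/
def IsNAResidual [Group G] (N : Subgroup G) : Prop :=
  ∃ hN : N.Normal,
    haveI := hN
    Group.IsNilpotent ↥(commutator (G ⧸ N)) ∧
      ∀ M : Subgroup G, ∀ hM : M.Normal,
        (haveI := hM; Group.IsNilpotent ↥(commutator (G ⧸ M))) → N ≤ M

/-- `H` is an `𝔑`-projector of `G`: for every normal `N ⊴ G`, the image `HN/N` is a
maximal nilpotent subgroup of `G/N`. -/
def IsNProjector [Group G] (H : Subgroup G) : Prop :=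
  ∀ N : Subgroup G, ∀ hN : N.Normal,
    haveI := hN
    Group.IsNilpotent ↥(H.map (QuotientGroup.mk' N)) ∧
      ∀ K : Subgroup (G ⧸ N), Group.IsNilpotent ↥K →
        H.map (QuotientGroup.mk' N) ≤ K → K = H.map (QuotientGroup.mk' N)

/-
Embedding `B` into `G` preserves maximality of subgroups and the nilpotency of `L / K_L`, so a
witness against `𝔑`-abnormality of `A` in `B` is one in `G`. If `A < N_G(A)`, pick `L` covering
`A` inside `N_G(A)`: then `A ⊴ L` is maximal, so `L / A` has no proper nontrivial subgroup, is
cyclic, hence nilpotent, and `A` is its own core in `L`.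
-/
open Subgroup

section

variable {H : Type*} [Group G] [Group H]

namespace Subgroup

def mapOrderEmbedding {f : H →* G} (hf : Function.Injective f) : Subgroup H ↪o Subgroup G :=
  OrderEmbedding.ofMapLEIff (map f) fun _ _ => map_le_map_iff_of_injective hf

def comapOrderEmbedding {f : G →* H} (hf : Function.Surjective f) : Subgroup H ↪o Subgroup G :=
  OrderEmbedding.ofMapLEIff (comap f) fun _ _ => comap_le_comap_of_surjective hf

lemma range_mapOrderEmbedding {f : H →* G} (hf : Function.Injective f) :
    Set.range (mapOrderEmbedding hf) = Set.Iic f.range := by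
  ext M
  exact ⟨by rintro ⟨N, rfl⟩; exact map_le_range f N,
    fun hM => ⟨M.comap f, map_comap_eq_self hM⟩⟩

lemma range_comapOrderEmbedding {f : G →* H} (hf : Function.Surjective f) :
    Set.range (comapOrderEmbedding hf) = Set.Ici f.ker := by
  ext M
  exact ⟨by rintro ⟨N, rfl⟩; exact ker_le_comap f N,
    fun hM => ⟨M.map f, comap_map_eq_self hM⟩⟩

lemma map_covBy_map_iff {f : H →* G} (hf : Function.Injective f) {K L : Subgroup H} :
    K.map f ⋖ L.map f ↔ K ⋖ L :=
  Set.OrdConnected.apply_covBy_apply_iff (mapOrderEmbedding hf)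
    (range_mapOrderEmbedding hf ▸ Set.ordConnected_Iic)

lemma comap_covBy_comap_iff {f : G →* H} (hf : Function.Surjective f) {K L : Subgroup H} :
    K.comap f ⋖ L.comap f ↔ K ⋖ L :=
  Set.OrdConnected.apply_covBy_apply_iff (comapOrderEmbedding hf)
    (range_comapOrderEmbedding hf ▸ Set.ordConnected_Ici)

lemma normalCore_map_mulEquiv (e : G ≃* H) (N : Subgroup G) :
    (N.map e.toMonoidHom).normalCore = N.normalCore.map e.toMonoidHom := by
  ext x
  rw [mem_map_equiv]
  change (∀ b, b * x * b⁻¹ ∈ N.map e.toMonoidHom) ↔ ∀ c, c * e.symm x * c⁻¹ ∈ N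
  simp only [mem_map_equiv, map_mul, map_inv]
  exact (e.symm.surjective.forall (p := fun c => c * e.symm x * c⁻¹ ∈ N)).symm

end Subgroup

lemma isCyclic_of_isSimpleOrder_subgroup [IsSimpleOrder (Subgroup G)] : IsCyclic G := by
  have : Nontrivial G := Subgroup.nontrivial_iff.mp inferInstance
  obtain ⟨g, hg⟩ := exists_ne (1 : G)
  have hgen : zpowers g = ⊤ :=
    (IsSimpleOrder.eq_bot_or_eq_top (zpowers g)).resolve_left (zpowers_ne_bot.mpr hg)
  exact ⟨g, (eq_top_iff' _).mp hgen⟩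

lemma QuotientGroup.isCyclic_of_covBy_top {N : Subgroup G} [N.Normal] (hN : N ⋖ ⊤) :
    IsCyclic (G ⧸ N) := by
  have hbot : (⊥ : Subgroup (G ⧸ N)) ⋖ ⊤ := by
    rw [← comap_covBy_comap_iff (QuotientGroup.mk'_surjective N), comap_top,
      MonoidHom.comap_bot, QuotientGroup.ker_mk']
    exact hN
  have := isSimpleOrder_iff_isAtom_top.mpr (bot_covBy_iff.mp hbot)
  exact isCyclic_of_isSimpleOrder_subgroup

lemma isMaximalSubgroupOf_iff_covBy {K L : Subgroup G} :
    IsMaximalSubgroupOf K L ↔ K ⋖ L :=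
  and_congr_right fun _ =>
    ⟨fun h M hKM hML => hML.ne (h M hKM hML.le),
      fun h _ hKM hML => hML.eq_of_not_lt (h hKM)⟩

lemma IsMaximalSubgroupOf.map {f : H →* G} (hf : Function.Injective f) {K L : Subgroup H}
    (h : IsMaximalSubgroupOf K L) : IsMaximalSubgroupOf (K.map f) (L.map f) := by
  rw [isMaximalSubgroupOf_iff_covBy] at h ⊢
  exact (map_covBy_map_iff hf).mpr h

lemma map_subgroupOf_equivMapOfInjective {f : H →* G} (hf : Function.Injective f)
    (K L : Subgroup H) :
    (K.subgroupOf L).map (L.equivMapOfInjective f hf).toMonoidHom =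
      (K.map f).subgroupOf (L.map f) := by
  ext x
  obtain ⟨z, rfl⟩ := (L.equivMapOfInjective f hf).surjective x
  rw [mem_map_equiv, MulEquiv.symm_apply_apply, mem_subgroupOf, mem_subgroupOf,
    coe_equivMapOfInjective_apply, mem_map_iff_mem hf]

lemma NilpotentQuotByCore.map {f : H →* G} (hf : Function.Injective f) {K L : Subgroup H}
    (h : NilpotentQuotByCore K L) : NilpotentQuotByCore (K.map f) (L.map f) := by
  let e := L.equivMapOfInjective f hf
  have hcore : ((K.subgroupOf L).normalCore).map e.toMonoidHom =
      ((K.map f).subgroupOf (L.map f)).normalCore := by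
    rw [← normalCore_map_mulEquiv, map_subgroupOf_equivMapOfInjective]
  exact Group.nilpotent_of_mulEquiv (_h := h) (QuotientGroup.congr _ _ e hcore)

lemma NAbnormal.subgroupOf {A B : Subgroup G} (hA : NAbnormal A) (hAB : A ≤ B) :
    NAbnormal (A.subgroupOf B) := by
  intro K L hK hKL hnil
  refine hA _ _ ?_ (hKL.map B.subtype_injective) (hnil.map B.subtype_injective)
  calc A = (A.subgroupOf B).map B.subtype := by rw [subgroupOf_map_subtype, inf_of_le_left hAB]
    _ ≤ K.map B.subtype := map_mono hK

lemma nilpotentQuotByCore_of_le_normalizer {K L : Subgroup G}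
    (hKL : IsMaximalSubgroupOf K L) (hL : L ≤ normalizer (K : Set G)) :
    NilpotentQuotByCore K L := by
  have hcov : K ⋖ L := isMaximalSubgroupOf_iff_covBy.mp hKL
  have : (K.subgroupOf L).Normal := (normal_subgroupOf_iff_le_normalizer hcov.le).mpr hL
  have hcov' : K.subgroupOf L ⋖ ⊤ := by
    rwa [← map_covBy_map_iff L.subtype_injective, subgroupOf_map_subtype,
      inf_of_le_left hcov.le, ← MonoidHom.range_eq_map, range_subtype]
  have := QuotientGroup.isCyclic_of_covBy_top hcov'
  let := IsCyclic.commGroup (α := L ⧸ K.subgroupOf L)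
  exact Group.nilpotent_of_mulEquiv
    (QuotientGroup.quotientMulEquivOfEq (normalCore_eq_self _).symm)

lemma NAbnormal.normalizer_eq [Finite G] {A : Subgroup G} (hA : NAbnormal A) :
    normalizer (A : Set G) = A := by
  refine (le_normalizer.lt_or_eq.resolve_left fun hlt => ?_).symm
  obtain ⟨L, hAL, hLN⟩ := exists_covBy_le_of_lt hlt
  have hmax := isMaximalSubgroupOf_iff_covBy.mpr hAL
  exact hA A L le_rfl hmax (nilpotentQuotByCore_of_le_normalizer hmax hLN)

end

theorem stmt_12 [Group G] [Finite G] (A B : Subgroup G) (hAB : A ≤ B)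
    (hA : NAbnormal A) :
    NAbnormal (A.subgroupOf B) ∧ Subgroup.normalizer (A : Set G) = A :=
  ⟨hA.subgroupOf hAB, hA.normalizer_eq⟩
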